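/- If A ∈ 𝒞 has total rank one, i.e., Σ_{i ∈ I} rank(A i) = 1 (equivalently, exactly one component A i₀ is nonzero and has rank one, all other components being zero), then A is an extreme point of 𝒞. -/

import Mathlib

open ContinuousLinearMap

/-- The linear map `L(A) = (1/|G|) · Σ_{i ∈ I} Σ_{g ∈ G} (U g) ∘ (A i) ∘ (U g)†`
associated to a family of operators `A : I → (H →L[ℂ] H)`. -/
noncomputable def Lmap {H : Type*} [NormedAddCommGroup H] [InnerProductSpace ℂ H]
    [FiniteDimensional ℂ H] {G : Type*} [Group G] [Fintype G] {I : Type*} [Fintype I]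
    (U : G → (H →L[ℂ] H)) (A : I → (H →L[ℂ] H)) : H →L[ℂ] H :=
  (Fintype.card G : ℂ)⁻¹ •
    ∑ i : I, ∑ g : G, U g ∘L A i ∘L ContinuousLinearMap.adjoint (U g)

/-- The convex set `𝒞` of block operators corresponding to covariant POVMs with
outcome space `I × G`: families `A` with every `A i` positive semidefinite and `L(A) = 1`. -/
def covSet {H : Type*} [NormedAddCommGroup H] [InnerProductSpace ℂ H]
    [FiniteDimensional ℂ H] {G : Type*} [Group G] [Fintype G] {I : Type*} [Fintype I]
    (U : G → (H →L[ℂ] H)) : Set (I → (H →L[ℂ] H)) :=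
  {A | (∀ i, (A i).IsPositive) ∧ Lmap U A = 1}

/-
If `A = a • B + b • C` with `B, C ∈ 𝒞` and `a > 0`, positivity gives `ker (A i) ≤ ker (B i)`.
For self-adjoint operators this is `range (B i) ≤ range (A i)`. Total rank one means `A` is
supported at one index `i₀`, where `range (A i₀)` is a line; hence `B = c • A` for a scalar `c`,
and `L(B) = c • L(A)` forces `c = 1`.
-/

open scoped InnerProductSpace

theorem LinearMap.exists_eq_smul_of_ker_le_of_range_le {K V W : Type*} [Field K]
    [AddCommGroup V] [Module K V] [AddCommGroup W] [Module K W] {S T : V →ₗ[K] W}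
    (hT : Module.finrank K (LinearMap.range T) = 1) (hker : LinearMap.ker T ≤ LinearMap.ker S)
    (hrange : LinearMap.range S ≤ LinearMap.range T) : ∃ c : K, S = c • T := by
  obtain ⟨⟨_, y, rfl⟩, -, hspan⟩ := finrank_eq_one_iff'.1 hT
  obtain ⟨c, hc⟩ := hspan ⟨S y, hrange ⟨y, rfl⟩⟩
  refine ⟨c, LinearMap.ext fun z => ?_⟩
  obtain ⟨α, hα⟩ := hspan ⟨T z, z, rfl⟩
  replace hc : c • T y = S y := congrArg Subtype.val hc
  replace hα : α • T y = T z := congrArg Subtype.val hα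
  have hSz : S z = α • S y := by
    have hz : z - α • y ∈ LinearMap.ker T := by simp [hα]
    simpa [sub_eq_zero] using hker hz
  rw [LinearMap.smul_apply, hSz, ← hc, ← hα, smul_comm]

theorem Fintype.exists_eq_piSingle_of_sum_eq_one {ι : Type*} [Fintype ι] [DecidableEq ι]
    {f : ι → ℕ} (h : ∑ i, f i = 1) : ∃ i₀, f = Pi.single i₀ 1 := by
  obtain ⟨i₀, hi₀⟩ := (Finsupp.sum_eq_one_iff (Finsupp.equivFunOnFinite.symm f)).1
    (by rwa [Finsupp.sum_fintype _ _ fun _ => rfl])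
  exact ⟨i₀, by simpa [Finsupp.single_eq_pi_single] using congrArg (⇑) hi₀⟩

namespace ContinuousLinearMap

section Positive

variable {E : Type*} [NormedAddCommGroup E] [InnerProductSpace ℂ E] [CompleteSpace E]

theorem IsPositive.apply_eq_zero_of_re_inner_eq_zero {T : E →L[ℂ] E} (hT : T.IsPositive) {y : E}
    (h : RCLike.re ⟪T y, y⟫_ℂ = 0) : T y = 0 := by
  -- `T = S * S` with `S = √T` self-adjoint, so `⟪T y, y⟫ = ‖S y‖²`.
  set S := CFC.sqrt T
  have hTS : T = S * S := (CFC.sqrt_mul_sqrt_self T ((nonneg_iff_isPositive T).2 hT)).symm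
  have hS : IsSelfAdjoint S := (CFC.sqrt_nonneg T).isSelfAdjoint
  have hSy : S y = 0 := by
    have hSS : ⟪S (S y), y⟫_ℂ = ⟪S y, S y⟫_ℂ := hS.isSymmetric (S y) y
    rw [hTS, mul_apply_eq_comp, hSS, inner_self_eq_norm_sq] at h
    simpa using h
  rw [hTS, mul_apply_eq_comp, hSy, map_zero]

theorem IsPositive.ker_smul_add_smul_le {S R : E →L[ℂ] E} (hS : S.IsPositive) (hR : R.IsPositive)
    {a b : ℝ} (ha : 0 < a) (hb : 0 ≤ b) :
    LinearMap.ker (a • S + b • R : E →ₗ[ℂ] E) ≤ LinearMap.ker (S : E →ₗ[ℂ] E) := by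
  intro y hy
  have hsum : RCLike.re ⟪S y, y⟫_ℂ * a + RCLike.re ⟪R y, y⟫_ℂ * b = 0 := by
    simpa [inner_add_left, ← Complex.coe_smul, inner_smul_real_left] using
      congrArg (fun z => RCLike.re ⟪z, y⟫_ℂ) (LinearMap.mem_ker.1 hy)
  have hSy := hS.re_inner_nonneg_left y
  have hRy := hR.re_inner_nonneg_left y
  exact hS.apply_eq_zero_of_re_inner_eq_zero (by nlinarith)

end Positive

theorem exists_eq_smul_of_ker_le {𝕜 E : Type*} [RCLike 𝕜]
    [NormedAddCommGroup E] [InnerProductSpace 𝕜 E] [FiniteDimensional 𝕜 E] {S T : E →L[𝕜] E}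
    (hS : (S : E →ₗ[𝕜] E).IsSymmetric) (hT : (T : E →ₗ[𝕜] E).IsSymmetric)
    (hrank : Module.finrank 𝕜 (LinearMap.range (T : E →ₗ[𝕜] E)) = 1)
    (hker : LinearMap.ker (T : E →ₗ[𝕜] E) ≤ LinearMap.ker (S : E →ₗ[𝕜] E)) :
    ∃ c : 𝕜, S = c • T := by
  obtain ⟨c, hc⟩ := LinearMap.exists_eq_smul_of_ker_le_of_range_le hrank hker
    ((ker_le_ker_iff_range_le_range hS hT).1 hker)
  exact ⟨c, coe_injective (by simpa using hc)⟩

end ContinuousLinearMap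

section CovSet

variable {H : Type*} [NormedAddCommGroup H] [InnerProductSpace ℂ H] [FiniteDimensional ℂ H]
  {G : Type*} [Group G] [Fintype G] {I : Type*} [Fintype I] (U : G → (H →L[ℂ] H))

theorem Lmap_smul (c : ℂ) (A : I → (H →L[ℂ] H)) : Lmap U (c • A) = c • Lmap U A := by
  simp only [Lmap, Pi.smul_apply, comp_smul, smul_comp, ← Finset.smul_sum]
  rw [smul_comm]

theorem eq_of_mem_covSet_of_ker_le {A B : I → (H →L[ℂ] H)} (hA : A ∈ covSet U)
    (hB : B ∈ covSet U) (hrank : ∑ i, Module.finrank ℂ (LinearMap.range (A i : H →ₗ[ℂ] H)) = 1)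
    (hker : ∀ i, LinearMap.ker (A i : H →ₗ[ℂ] H) ≤ LinearMap.ker (B i : H →ₗ[ℂ] H)) :
    B = A := by
  classical
  obtain ⟨i₀, hi₀⟩ := Fintype.exists_eq_piSingle_of_sum_eq_one hrank
  have hrank₀ : Module.finrank ℂ (LinearMap.range (A i₀ : H →ₗ[ℂ] H)) = 1 := by
    simpa using congrFun hi₀ i₀
  have hA_eq_zero : ∀ i ≠ i₀, A i = 0 := fun i hi => by
    have : Module.finrank ℂ (LinearMap.range (A i : H →ₗ[ℂ] H)) = 0 := by
      simpa [hi] using congrFun hi₀ i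
    exact coe_injective (LinearMap.range_eq_bot.1 (Submodule.finrank_eq_zero.1 this))
  obtain ⟨c, hc⟩ := exists_eq_smul_of_ker_le (hB.1 i₀).isSymmetric (hA.1 i₀).isSymmetric
    hrank₀ (hker i₀)
  have hBA : B = c • A := funext fun i => by
    by_cases hi : i = i₀
    · subst hi
      exact hc
    · have hBi : LinearMap.ker (B i : H →ₗ[ℂ] H) = ⊤ := by
        simpa [hA_eq_zero i hi] using hker i
      rw [Pi.smul_apply, hA_eq_zero i hi, smul_zero]
      exact coe_injective (LinearMap.ker_eq_top.1 hBi)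
  have : Nontrivial H :=
    Module.finrank_pos_iff.1 (hrank₀ ▸ Submodule.finrank_le _ |>.trans_lt' one_pos)
  have hc1 : c = 1 := by
    have h := hB.2
    rw [hBA, Lmap_smul, hA.2] at h
    exact smul_left_injective ℂ one_ne_zero (h.trans (one_smul ℂ 1).symm)
  rw [hBA, hc1, one_smul]

end CovSet

theorem rank_one_extremePoint
    {H : Type*} [NormedAddCommGroup H] [InnerProductSpace ℂ H] [FiniteDimensional ℂ H]
    {G : Type*} [Group G] [Fintype G] {I : Type*} [Fintype I]
    (U : G → (H →L[ℂ] H))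
    (A : I → (H →L[ℂ] H)) (hA : A ∈ covSet U)
    (hrank : ∑ i, Module.finrank ℂ (LinearMap.range (A i : H →ₗ[ℂ] H)) = 1) :
    A ∈ Set.extremePoints ℝ (covSet U) := by
  refine mem_extremePoints.2 ⟨hA, fun B hB C hC ⟨a, b, ha, hb, _, hABC⟩ => ⟨?_, ?_⟩⟩
  · refine eq_of_mem_covSet_of_ker_le U hA hB hrank fun i => ?_
    rw [← congrFun hABC i]
    exact (hB.1 i).ker_smul_add_smul_le (hC.1 i) ha hb.le
  · refine eq_of_mem_covSet_of_ker_le U hA hC hrank fun i => ?_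
    rw [← congrFun hABC i, Pi.add_apply, add_comm]
    exact (hC.1 i).ker_smul_add_smul_le (hB.1 i) hb ha.le
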